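/- On the elliptic curve E : y^2 + 6308333·xy + 8325824903545553131·y = x^3 over Q, the point P = (8318014288129, 8325824903545553131) has order exactly 6, and 2P = (0,0). -/

import Mathlib

def E : WeierstrassCurve.Affine ℚ :=
  ⟨6308333, 0, 8325824903545553131, 0, 0⟩

/-!
`E` has `a₂ = a₄ = a₆ = 0`, so `y = 0` is the tangent line at `Q = (0,0)` and meets the curve
only there: `Q` is a flex, hence `2Q = -Q` and `Q` has order `3`. A direct tangent computation
(slope `2001878`) gives `2P = Q`, and `3P = Q + P ≠ 0` since `Q` and `P` have different
`x`-coordinates. So `6P = 0` while `2P ≠ 0` and `3P ≠ 0`.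
-/

theorem addOrderOf_eq_six_of_two_nsmul {G : Type*} [AddMonoid G] {x : G}
    (h2 : addOrderOf ((2 : ℕ) • x) = 3) (h3 : (3 : ℕ) • x ≠ 0) : addOrderOf x = 6 := by
  refine addOrderOf_eq_of_nsmul_and_div_prime_nsmul (by norm_num) ?_ fun p hp hdvd => ?_
  · rw [show 6 = 3 * 2 from rfl, mul_nsmul', ← h2, addOrderOf_nsmul_eq_zero]
  · have hp6 : p ≤ 6 := Nat.le_of_dvd (by norm_num) hdvd
    have hp23 : p = 2 ∨ p = 3 := by interval_cases p <;> first | omega | norm_num at hp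
    rcases hp23 with rfl | rfl
    · exact h3
    · intro h
      simp [h] at h2

namespace WeierstrassCurve.Affine.Point

variable {F : Type*} [Field F] {W : Affine F}

lemma some_congr {x₁ y₁ x₂ y₂ : F} (h₁ : W.Nonsingular x₁ y₁) (h₂ : W.Nonsingular x₂ y₂)
    (hx : x₁ = x₂) (hy : y₁ = y₂) : Point.some _ _ h₁ = Point.some _ _ h₂ := by
  subst hx hy
  rfl

variable [DecidableEq F]

lemma some_zero_zero_add_self (ha₂ : W.a₂ = 0) (ha₄ : W.a₄ = 0) (h : W.Nonsingular 0 0) :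
    Point.some _ _ h + Point.some _ _ h = -Point.some _ _ h := by
  have ha₃ : W.a₃ ≠ 0 := (nonsingular_zero.mp h).2.resolve_right (not_not.mpr ha₄)
  have hy : (0 : F) ≠ W.negY 0 0 := by simpa [negY, eq_comm] using ha₃
  have hslope : W.slope 0 0 0 0 = 0 := by simp [slope_of_Y_ne rfl hy, ha₂, ha₄]
  rw [add_self_of_Y_ne' hy, neg_inj]
  exact some_congr _ _ (by simp [addX, hslope, ha₂]) (by simp [negAddY, hslope])

lemma addOrderOf_some_zero_zero (ha₂ : W.a₂ = 0) (ha₄ : W.a₄ = 0)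
    (h : W.Nonsingular 0 0) : addOrderOf (Point.some _ _ h) = 3 := by
  refine addOrderOf_eq_prime ?_ (some_ne_zero h)
  rw [succ_nsmul, two_nsmul, some_zero_zero_add_self ha₂ ha₄ h, neg_add_cancel]

end WeierstrassCurve.Affine.Point

open WeierstrassCurve.Affine WeierstrassCurve.Affine.Point

lemma E_nonsingular_P : E.Nonsingular 8318014288129 8325824903545553131 := by
  rw [nonsingular_iff, equation_iff]
  exact ⟨by norm_num [E], Or.inr (by norm_num [E])⟩

lemma E_nonsingular_zero : E.Nonsingular 0 0 :=
  nonsingular_zero.mpr ⟨rfl, Or.inl (by norm_num [E])⟩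

lemma E_two_nsmul_P :
    (2 : ℕ) • Point.some _ _ E_nonsingular_P = Point.some _ _ E_nonsingular_zero := by
  have hy : (8325824903545553131 : ℚ) ≠ E.negY 8318014288129 8325824903545553131 := by
    norm_num [negY, E]
  have hslope : E.slope 8318014288129 8318014288129 8325824903545553131 8325824903545553131
      = 2001878 := by
    rw [slope_of_Y_ne rfl hy, div_eq_iff (by norm_num [negY, E])]
    norm_num [negY, E]
  rw [two_nsmul, add_self_of_Y_ne hy]
  exact some_congr _ _ (by norm_num [addX, hslope, E])
    (by norm_num [addY, negAddY, addX, negY, hslope, E])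

/-- On `E`, the point `P = (8318014288129, 8325824903545553131)` has order exactly 6,
and `2P = (0,0)`. -/
theorem order_six_and_double :
    ∃ h : E.Nonsingular 8318014288129 8325824903545553131,
      ∃ h0 : E.Nonsingular 0 0,
        addOrderOf (WeierstrassCurve.Affine.Point.some _ _ h) = 6 ∧
        (2 : ℤ) • WeierstrassCurve.Affine.Point.some _ _ h = WeierstrassCurve.Affine.Point.some _ _ h0 := by
  refine ⟨E_nonsingular_P, E_nonsingular_zero, addOrderOf_eq_six_of_two_nsmul ?_ ?_, ?_⟩
  · rw [E_two_nsmul_P]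
    exact addOrderOf_some_zero_zero rfl rfl _
  · rw [succ_nsmul, E_two_nsmul_P, add_of_X_ne (by norm_num)]
    exact some_ne_zero _
  · rw [two_zsmul, ← two_nsmul, E_two_nsmul_P]
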